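/- Let q ∈ (1,∞) and κ ≥ 0. There are constants 0 < c ≤ C < ∞ depending only on q such that: (i) for all a ≥ 0 with κ + a > 0 and all λ ∈ [0,1], c λ² ρ(a) ≤ ρ_a(λ a) ≤ C λ² ρ(a) and c λ² ρ(a) ≤ (ρ_a)*(λ ρ'(a)) ≤ C λ² ρ(a), where ρ'(a) = (κ+a)^{q−2} a; and (ii) for all a, t ≥ 0 with κ + a + t > 0, c ρ_a(t) ≤ (ρ_a)*(ρ'_a(t)) ≤ C ρ_a(t). -/

import Mathlib

/-!
Write `b = κ + a`, so that `ρ_a'(t) = (b + t)^(q-2) t`. The derivative `ρ_a'` is increasing, and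
of `τ ↦ ρ_a'(τ)/τ` and `τ ↦ ρ_a'(τ)/τ^(q-1)` one is increasing and the other decreasing; integrating
these comparisons traps `ρ_a(t)` between `t ρ_a'(t) / max 2 q` and `t ρ_a'(t) / min 2 q`.
Monotonicity of `ρ_a'` also gives Young's equality `(ρ_a)*(ρ_a'(t)) = t ρ_a'(t) - ρ_a(t)`,
whence (ii).

For (i), `b ≤ b + λa ≤ 2b` makes `(b + λa)^(q-2)` comparable to `b^(q-2)`, so `ρ_a(λa)` and
`λ² ρ(a)` are both comparable to `λ² a² b^(q-2)`. The conjugate at `λ ρ'(a)` is bounded above by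
Young's equality at `N λa`, where `N = 2^(1/(q-1))` makes `ρ_a'(N λa) ≥ λ ρ'(a)`, and below by
testing the supremum at `s = λa / (2 max 1 2^(q-2))`, small enough that `ρ_a'(s) ≤ λ ρ'(a) / 2`.
-/

/-- The shifted `N`-function `ρ_a(t) = ∫₀ᵗ (κ+a+τ)^{q−2} τ dτ`; in particular
`ρ = ρ_0`, i.e. `ρ(t) = ∫₀ᵗ (κ+s)^{q−2} s ds`. -/
noncomputable def rhoShift (κ q a t : ℝ) : ℝ :=
  ∫ τ in (0:ℝ)..t, (κ + a + τ) ^ (q - 2) * τ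

/-- The convex conjugate `(ρ_a)*(t) = sup_{s ≥ 0} (s t − ρ_a(s))`. -/
noncomputable def rhoShiftConj (κ q a t : ℝ) : ℝ :=
  sSup {v : ℝ | ∃ s : ℝ, 0 ≤ s ∧ v = s * t - rhoShift κ q a s}

open MeasureTheory intervalIntegral Set Real

lemma integral_div_rpow_mul {r t : ℝ} (hr : -1 < r) (ht : 0 < t) (c : ℝ) :
    ∫ τ in (0:ℝ)..t, (τ / t) ^ r * c = t * c / (r + 1) := by
  rw [intervalIntegral.integral_mul_const, intervalIntegral.integral_comp_div (· ^ r) ht.ne',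
    integral_rpow (Or.inl hr), zero_div, div_self ht.ne', one_rpow,
    zero_rpow (by linarith), smul_eq_mul]
  ring

lemma intervalIntegrable_div_rpow_mul {r t : ℝ} (hr : 0 ≤ r) (c : ℝ) :
    IntervalIntegrable (fun τ => (τ / t) ^ r * c) volume 0 t :=
  (((continuous_id.div_const t).rpow_const fun _ => Or.inr hr).mul
    continuous_const).intervalIntegrable 0 t

lemma mul_div_le_integral_of_div_rpow_mul_le {f : ℝ → ℝ} {r t : ℝ} (hr : 0 ≤ r) (ht : 0 < t)
    (hf : IntervalIntegrable f volume 0 t) (h : ∀ τ ∈ Ioo 0 t, (τ / t) ^ r * f t ≤ f τ) :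
    t * f t / (r + 1) ≤ ∫ τ in (0:ℝ)..t, f τ := by
  rw [← integral_div_rpow_mul (by linarith) ht]
  exact integral_mono_on_of_le_Ioo ht.le (intervalIntegrable_div_rpow_mul hr _) hf h

lemma integral_le_mul_div_of_le_div_rpow_mul {f : ℝ → ℝ} {r t : ℝ} (hr : 0 ≤ r) (ht : 0 < t)
    (hf : IntervalIntegrable f volume 0 t) (h : ∀ τ ∈ Ioo 0 t, f τ ≤ (τ / t) ^ r * f t) :
    ∫ τ in (0:ℝ)..t, f τ ≤ t * f t / (r + 1) := by
  rw [← integral_div_rpow_mul (by linarith) ht]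
  exact integral_mono_on_of_le_Ioo ht.le hf (intervalIntegrable_div_rpow_mul hr _) h

lemma min_one_mul_rpow_le_rpow_add {p b x M : ℝ} (hb : 0 < b) (hx : 0 ≤ x) (hxM : x ≤ M * b) :
    min 1 ((1 + M) ^ p) * b ^ p ≤ (b + x) ^ p := by
  have hM : 0 ≤ M := nonneg_of_mul_nonneg_left (hx.trans hxM) hb
  rcases le_total 0 p with hp | hp
  · calc min 1 ((1 + M) ^ p) * b ^ p ≤ b ^ p :=
        mul_le_of_le_one_left (rpow_nonneg hb.le _) (min_le_left _ _)
      _ ≤ (b + x) ^ p := rpow_le_rpow hb.le (by linarith) hp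
  · calc min 1 ((1 + M) ^ p) * b ^ p ≤ (1 + M) ^ p * b ^ p := by gcongr; exact min_le_right _ _
      _ = ((1 + M) * b) ^ p := (mul_rpow (by linarith) hb.le).symm
      _ ≤ (b + x) ^ p := rpow_le_rpow_of_nonpos (by linarith) (by linarith) hp

lemma rpow_add_le_max_one_mul_rpow {p b x M : ℝ} (hb : 0 < b) (hx : 0 ≤ x) (hxM : x ≤ M * b) :
    (b + x) ^ p ≤ max 1 ((1 + M) ^ p) * b ^ p := by
  have hM : 0 ≤ M := nonneg_of_mul_nonneg_left (hx.trans hxM) hb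
  rcases le_total 0 p with hp | hp
  · calc (b + x) ^ p ≤ ((1 + M) * b) ^ p := rpow_le_rpow (by linarith) (by linarith) hp
      _ = (1 + M) ^ p * b ^ p := mul_rpow (by linarith) hb.le
      _ ≤ max 1 ((1 + M) ^ p) * b ^ p := by gcongr; exact le_max_right _ _
  · calc (b + x) ^ p ≤ b ^ p := rpow_le_rpow_of_nonpos hb (by linarith) hp
      _ ≤ max 1 ((1 + M) ^ p) * b ^ p :=
        le_mul_of_one_le_left (rpow_nonneg hb.le _) (le_max_left _ _)

lemma div_add_le_div_add {b x y : ℝ} (hb : 0 ≤ b) (hx : 0 ≤ x) (hxy : x ≤ y) :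
    x / (b + x) ≤ y / (b + y) := by
  rcases (add_nonneg hb hx).eq_or_lt with h | h
  · rw [← h, div_zero]
    exact div_nonneg (by linarith) (by linarith)
  · rw [div_le_div_iff₀ h (by linarith)]
    nlinarith

noncomputable def rhoShiftDeriv (κ q a t : ℝ) : ℝ := (κ + a + t) ^ (q - 2) * t

section
variable {κ q a s t u : ℝ}

lemma rhoShift_eq_integral : rhoShift κ q a t = ∫ τ in (0:ℝ)..t, rhoShiftDeriv κ q a τ := rfl

lemma rhoShiftDeriv_nonneg (hb : 0 ≤ κ + a) (ht : 0 ≤ t) : 0 ≤ rhoShiftDeriv κ q a t :=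
  mul_nonneg (rpow_nonneg (by linarith) _) ht

lemma rhoShiftDeriv_eq_rpow_mul_div (hb : 0 ≤ κ + a) (ht : 0 ≤ t) :
    rhoShiftDeriv κ q a t = (κ + a + t) ^ (q - 1) * (t / (κ + a + t)) := by
  rcases (add_nonneg hb ht).eq_or_lt with h | h
  · obtain rfl : t = 0 := by linarith
    simp [rhoShiftDeriv]
  · rw [rhoShiftDeriv, show q - 1 = q - 2 + 1 by ring, rpow_add h, rpow_one]
    field_simp

lemma rhoShiftDeriv_eq_rpow_mul_rpow (hb : 0 ≤ κ + a) (ht : 0 < t) :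
    rhoShiftDeriv κ q a t = t ^ (q - 1) * (t / (κ + a + t)) ^ (2 - q) := by
  have hbt : 0 < κ + a + t := by linarith
  rw [div_rpow ht.le hbt.le, ← mul_div_assoc, ← rpow_add ht, show q - 1 + (2 - q) = 1 by ring,
    rpow_one, rhoShiftDeriv, show q - 2 = -(2 - q) by ring, rpow_neg hbt.le]
  field_simp

lemma monotoneOn_rhoShiftDeriv (hq : 1 < q) (hb : 0 ≤ κ + a) :
    MonotoneOn (rhoShiftDeriv κ q a) (Ici 0) := by
  intro x hx y hy hxy
  rw [rhoShiftDeriv_eq_rpow_mul_div hb hx, rhoShiftDeriv_eq_rpow_mul_div hb hy]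
  exact mul_le_mul (rpow_le_rpow (by linarith [mem_Ici.1 hx]) (by linarith) (by linarith))
    (div_add_le_div_add hb hx hxy) (div_nonneg hx (by linarith [mem_Ici.1 hx]))
    (rpow_nonneg (by linarith [mem_Ici.1 hy]) _)

lemma intervalIntegrable_rhoShiftDeriv (hq : 1 < q) (hb : 0 ≤ κ + a) (hs : 0 ≤ s) (ht : 0 ≤ t) :
    IntervalIntegrable (rhoShiftDeriv κ q a) volume s t :=
  ((monotoneOn_rhoShiftDeriv hq hb).mono fun _ hτ => (le_min hs ht).trans hτ.1).intervalIntegrable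

lemma rhoShift_nonneg (hb : 0 ≤ κ + a) (ht : 0 ≤ t) : 0 ≤ rhoShift κ q a t :=
  integral_nonneg ht fun _ hτ => rhoShiftDeriv_nonneg hb hτ.1

lemma sub_mul_rhoShiftDeriv_le_integral (hq : 1 < q) (hb : 0 ≤ κ + a) (hs : 0 ≤ s) (ht : 0 ≤ t) :
    (s - t) * rhoShiftDeriv κ q a t ≤ ∫ τ in t..s, rhoShiftDeriv κ q a τ := by
  have hmono := monotoneOn_rhoShiftDeriv hq hb
  rcases le_total t s with hts | hst
  · calc (s - t) * rhoShiftDeriv κ q a t = ∫ _ in t..s, rhoShiftDeriv κ q a t := by simp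
      _ ≤ _ := integral_mono_on hts intervalIntegrable_const
          (intervalIntegrable_rhoShiftDeriv hq hb ht hs)
          fun τ hτ => hmono ht (ht.trans hτ.1) hτ.1
  · rw [integral_symm, show (s - t) * rhoShiftDeriv κ q a t = -((t - s) * rhoShiftDeriv κ q a t)
      by ring, neg_le_neg_iff]
    calc ∫ τ in s..t, rhoShiftDeriv κ q a τ ≤ ∫ _ in s..t, rhoShiftDeriv κ q a t :=
          integral_mono_on hst (intervalIntegrable_rhoShiftDeriv hq hb hs ht)
            intervalIntegrable_const fun τ hτ => hmono (hs.trans hτ.1) ht hτ.2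
      _ = (t - s) * rhoShiftDeriv κ q a t := by simp

lemma mul_sub_rhoShift_le (hq : 1 < q) (hb : 0 ≤ κ + a) (hs : 0 ≤ s) (ht : 0 ≤ t) :
    s * rhoShiftDeriv κ q a t - rhoShift κ q a s ≤
      t * rhoShiftDeriv κ q a t - rhoShift κ q a t := by
  have hsub := integral_interval_sub_left (intervalIntegrable_rhoShiftDeriv hq hb le_rfl hs)
    (intervalIntegrable_rhoShiftDeriv hq hb le_rfl ht)
  rw [← rhoShift_eq_integral, ← rhoShift_eq_integral] at hsub
  linarith [sub_mul_rhoShiftDeriv_le_integral hq hb hs ht]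

lemma rhoShift_le_mul_rhoShiftDeriv (hq : 1 < q) (hb : 0 ≤ κ + a) (ht : 0 ≤ t) :
    rhoShift κ q a t ≤ t * rhoShiftDeriv κ q a t := by
  simpa [rhoShift] using mul_sub_rhoShift_le hq hb le_rfl ht

lemma mem_upperBounds_rhoShiftConj (hq : 1 < q) (hb : 0 ≤ κ + a) (ht : 0 ≤ t)
    (hu : u ≤ rhoShiftDeriv κ q a t) :
    t * rhoShiftDeriv κ q a t - rhoShift κ q a t ∈
      upperBounds {v : ℝ | ∃ s : ℝ, 0 ≤ s ∧ v = s * u - rhoShift κ q a s} := by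
  rintro _ ⟨s, hs, rfl⟩
  exact (sub_le_sub_right (mul_le_mul_of_nonneg_left hu hs) _).trans
    (mul_sub_rhoShift_le hq hb hs ht)

lemma rhoShiftConj_le (hq : 1 < q) (hb : 0 ≤ κ + a) (ht : 0 ≤ t)
    (hu : u ≤ rhoShiftDeriv κ q a t) :
    rhoShiftConj κ q a u ≤ t * rhoShiftDeriv κ q a t - rhoShift κ q a t :=
  csSup_le ⟨_, 0, le_rfl, rfl⟩ (mem_upperBounds_rhoShiftConj hq hb ht hu)

lemma le_rhoShiftConj (hq : 1 < q) (hb : 0 ≤ κ + a) (ht : 0 ≤ t)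
    (hu : u ≤ rhoShiftDeriv κ q a t) (hs : 0 ≤ s) :
    s * u - rhoShift κ q a s ≤ rhoShiftConj κ q a u :=
  le_csSup ⟨_, mem_upperBounds_rhoShiftConj hq hb ht hu⟩ ⟨s, hs, rfl⟩

lemma rhoShiftConj_rhoShiftDeriv (hq : 1 < q) (hb : 0 ≤ κ + a) (ht : 0 ≤ t) :
    rhoShiftConj κ q a (rhoShiftDeriv κ q a t) = t * rhoShiftDeriv κ q a t - rhoShift κ q a t :=
  (rhoShiftConj_le hq hb ht le_rfl).antisymm (le_rhoShiftConj hq hb ht le_rfl ht)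

end

section
variable {κ q a τ t : ℝ}

lemma div_mul_rhoShiftDeriv (ht : t ≠ 0) :
    τ / t * rhoShiftDeriv κ q a t = (κ + a + t) ^ (q - 2) * τ := by
  rw [rhoShiftDeriv]
  field_simp

lemma div_rpow_mul_rhoShiftDeriv (hb : 0 ≤ κ + a) (hτ : 0 ≤ τ) (ht : 0 < t) :
    (τ / t) ^ (q - 1) * rhoShiftDeriv κ q a t = τ ^ (q - 1) * (t / (κ + a + t)) ^ (2 - q) := by
  rw [rhoShiftDeriv_eq_rpow_mul_rpow hb ht, div_rpow hτ ht.le]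
  field_simp [(rpow_pos_of_pos ht (q - 1)).ne']

lemma rhoShiftDeriv_bounds_of_le_two (hq2 : q ≤ 2) (hb : 0 ≤ κ + a) (hτ : 0 < τ)
    (hτt : τ ≤ t) :
    τ / t * rhoShiftDeriv κ q a t ≤ rhoShiftDeriv κ q a τ ∧
      rhoShiftDeriv κ q a τ ≤ (τ / t) ^ (q - 1) * rhoShiftDeriv κ q a t := by
  have ht : 0 < t := hτ.trans_le hτt
  constructor
  · rw [div_mul_rhoShiftDeriv ht.ne', rhoShiftDeriv]
    exact mul_le_mul_of_nonneg_right
      (rpow_le_rpow_of_nonpos (by linarith) (by linarith) (by linarith)) hτ.le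
  · rw [div_rpow_mul_rhoShiftDeriv hb hτ.le ht, rhoShiftDeriv_eq_rpow_mul_rpow hb hτ]
    exact mul_le_mul_of_nonneg_left (rpow_le_rpow (div_nonneg hτ.le (by linarith))
      (div_add_le_div_add hb hτ.le hτt) (by linarith)) (rpow_nonneg hτ.le _)

lemma rhoShiftDeriv_bounds_of_two_le (h2q : 2 ≤ q) (hb : 0 ≤ κ + a) (hτ : 0 < τ)
    (hτt : τ ≤ t) :
    (τ / t) ^ (q - 1) * rhoShiftDeriv κ q a t ≤ rhoShiftDeriv κ q a τ ∧
      rhoShiftDeriv κ q a τ ≤ τ / t * rhoShiftDeriv κ q a t := by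
  have ht : 0 < t := hτ.trans_le hτt
  constructor
  · rw [div_rpow_mul_rhoShiftDeriv hb hτ.le ht, rhoShiftDeriv_eq_rpow_mul_rpow hb hτ]
    exact mul_le_mul_of_nonneg_left (rpow_le_rpow_of_nonpos (div_pos hτ (by linarith))
      (div_add_le_div_add hb hτ.le hτt) (by linarith)) (rpow_nonneg hτ.le _)
  · rw [div_mul_rhoShiftDeriv ht.ne', rhoShiftDeriv]
    exact mul_le_mul_of_nonneg_right
      (rpow_le_rpow (by linarith) (by linarith) (by linarith)) hτ.le

lemma rhoShift_bounds (hq : 1 < q) (hb : 0 ≤ κ + a) (ht : 0 ≤ t) :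
    min 2 q * rhoShift κ q a t ≤ t * rhoShiftDeriv κ q a t ∧
      t * rhoShiftDeriv κ q a t ≤ max 2 q * rhoShift κ q a t := by
  rcases ht.eq_or_lt with rfl | ht
  · simp [rhoShift]
  have hf := intervalIntegrable_rhoShiftDeriv hq hb le_rfl ht.le
  rw [rhoShift_eq_integral]
  rcases le_total q 2 with hq2 | h2q
  · have hlo := mul_div_le_integral_of_div_rpow_mul_le zero_le_one ht hf fun τ hτ => by
      simpa using (rhoShiftDeriv_bounds_of_le_two hq2 hb hτ.1 hτ.2.le).1
    have hhi := integral_le_mul_div_of_le_div_rpow_mul (by linarith) ht hf fun τ hτ =>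
      (rhoShiftDeriv_bounds_of_le_two hq2 hb hτ.1 hτ.2.le).2
    rw [sub_add_cancel] at hhi
    rw [min_eq_right hq2, max_eq_left hq2]
    exact ⟨(le_div_iff₀' (by linarith)).1 hhi, by linarith⟩
  · have hlo := mul_div_le_integral_of_div_rpow_mul_le (by linarith) ht hf fun τ hτ =>
      (rhoShiftDeriv_bounds_of_two_le h2q hb hτ.1 hτ.2.le).1
    have hhi := integral_le_mul_div_of_le_div_rpow_mul zero_le_one ht hf fun τ hτ => by
      simpa using (rhoShiftDeriv_bounds_of_two_le h2q hb hτ.1 hτ.2.le).2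
    rw [sub_add_cancel] at hlo
    rw [min_eq_left h2q, max_eq_right h2q]
    exact ⟨by linarith, (div_le_iff₀' (by linarith)).1 hlo⟩

end

lemma one_le_min_one_one_add_rpow_mul {q : ℝ} (hq : 1 < q) :
    1 ≤ min 1 ((1 + (2 : ℝ) ^ (1 / (q - 1))) ^ (q - 2)) * (2 : ℝ) ^ (1 / (q - 1)) := by
  set N : ℝ := 2 ^ (1 / (q - 1))
  have hN1 : 1 ≤ N := one_le_rpow one_le_two (div_nonneg zero_le_one (by linarith))
  have hNq : N ^ (q - 1) = 2 := by
    rw [← rpow_mul zero_le_two, one_div_mul_cancel (by linarith), rpow_one]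
  rw [min_mul_of_nonneg _ _ (by linarith), one_mul]
  refine le_min hN1 ?_
  rcases le_total 2 q with h2q | hq2
  · exact one_le_mul_of_one_le_of_one_le (one_le_rpow (by linarith) (by linarith)) hN1
  · calc (1 : ℝ) ≤ 2 ^ (q - 1) := one_le_rpow one_le_two (by linarith)
      _ = (2 * N) ^ (q - 2) * N := by
        rw [mul_rpow zero_le_two (by linarith), mul_assoc, ← rpow_add_one (by linarith),
          show q - 2 + 1 = q - 1 by ring, hNq, ← rpow_add_one two_ne_zero]
        ring_nf
      _ ≤ (1 + N) ^ (q - 2) * N := mul_le_mul_of_nonneg_right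
        (rpow_le_rpow_of_nonpos (by linarith) (by linarith) (by linarith)) (by linarith)

section
variable {κ q a t : ℝ}

lemma rpow_mul_le_rhoShiftDeriv (hq : 1 < q) (hb : 0 < κ + a) (ht : 0 ≤ t) (htb : t ≤ κ + a) :
    (κ + a) ^ (q - 2) * t ≤ rhoShiftDeriv κ q a (2 ^ (1 / (q - 1)) * t) := by
  set N : ℝ := 2 ^ (1 / (q - 1))
  have hN : 0 ≤ N := rpow_nonneg zero_le_two _
  have hNt : 0 ≤ N * t := mul_nonneg hN ht
  calc (κ + a) ^ (q - 2) * t ≤ (min 1 ((1 + N) ^ (q - 2)) * N) * ((κ + a) ^ (q - 2) * t) :=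
        le_mul_of_one_le_left (mul_nonneg (rpow_nonneg hb.le _) ht)
          (one_le_min_one_one_add_rpow_mul hq)
    _ = min 1 ((1 + N) ^ (q - 2)) * (κ + a) ^ (q - 2) * (N * t) := by ring
    _ ≤ (κ + a + N * t) ^ (q - 2) * (N * t) := mul_le_mul_of_nonneg_right
        (min_one_mul_rpow_le_rpow_add hb hNt (mul_le_mul_of_nonneg_left htb hN)) hNt

theorem rhoShiftConj_rhoShiftDeriv_bounds (hq : 1 < q) (hb : 0 ≤ κ + a) (ht : 0 ≤ t) :
    (min 2 q - 1) * rhoShift κ q a t ≤ rhoShiftConj κ q a (rhoShiftDeriv κ q a t) ∧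
      rhoShiftConj κ q a (rhoShiftDeriv κ q a t) ≤ (max 2 q - 1) * rhoShift κ q a t := by
  rw [rhoShiftConj_rhoShiftDeriv hq hb ht]
  obtain ⟨hlo, hhi⟩ := rhoShift_bounds hq hb ht
  constructor <;> linarith

lemma rhoShift_zero_bounds (hq : 1 < q) (hκ : 0 ≤ κ) (ha : 0 ≤ a) :
    min 2 q * rhoShift κ q 0 a ≤ (κ + a) ^ (q - 2) * a ^ 2 ∧
      (κ + a) ^ (q - 2) * a ^ 2 ≤ max 2 q * rhoShift κ q 0 a := by
  have h := rhoShift_bounds hq (a := 0) (by simpa using hκ) ha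
  simp only [rhoShiftDeriv, add_zero] at h
  constructor <;> linarith

theorem exists_rhoShift_mul_bounds (hq : 1 < q) :
    ∃ c C : ℝ, 0 < c ∧ ∀ κ a lam : ℝ, 0 ≤ κ → 0 ≤ a → 0 < κ + a → lam ∈ Icc (0 : ℝ) 1 →
      c * (lam ^ 2 * rhoShift κ q 0 a) ≤ rhoShift κ q a (lam * a) ∧
        rhoShift κ q a (lam * a) ≤ C * (lam ^ 2 * rhoShift κ q 0 a) := by
  have hm : 0 < min 2 q := lt_min two_pos (by linarith)
  have hM : 0 < max 2 q := lt_max_of_lt_left two_pos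
  have hk : 0 < min 1 ((2 : ℝ) ^ (q - 2)) := by positivity
  have hK : 0 < max 1 ((2 : ℝ) ^ (q - 2)) := by positivity
  refine ⟨min 2 q * min 1 (2 ^ (q - 2)) / max 2 q, max 2 q * max 1 (2 ^ (q - 2)) / min 2 q,
    div_pos (mul_pos hm hk) hM, ?_⟩
  intro κ a lam hκ ha hb ⟨hl0, hl1⟩
  have hla : 0 ≤ lam * a := mul_nonneg hl0 ha
  have hlab : lam * a ≤ 1 * (κ + a) := by nlinarith
  obtain ⟨hρlo, hρhi⟩ := rhoShift_zero_bounds hq hκ ha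
  obtain ⟨hXlo, hXhi⟩ := rhoShift_bounds hq hb.le hla
  have hPlo := min_one_mul_rpow_le_rpow_add (p := q - 2) hb hla hlab
  have hPhi := rpow_add_le_max_one_mul_rpow (p := q - 2) hb hla hlab
  rw [one_add_one_eq_two] at hPlo hPhi
  simp only [rhoShiftDeriv] at hXlo hXhi
  constructor
  · rw [div_mul_eq_mul_div, div_le_iff₀ hM]
    nlinarith [mul_le_mul_of_nonneg_right hPlo (sq_nonneg (lam * a)),
      mul_le_mul_of_nonneg_left hρlo (mul_nonneg hk.le (sq_nonneg lam))]
  · rw [div_mul_eq_mul_div, le_div_iff₀ hm]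
    nlinarith [mul_le_mul_of_nonneg_right hPhi (sq_nonneg (lam * a)),
      mul_le_mul_of_nonneg_left hρhi (mul_nonneg hK.le (sq_nonneg lam))]

end

section
variable {κ q a lam : ℝ}

lemma le_rhoShiftConj_mul (hq : 1 < q) (hκ : 0 ≤ κ) (ha : 0 ≤ a) (hb : 0 < κ + a)
    (hl0 : 0 ≤ lam) (hl1 : lam ≤ 1) :
    min 2 q / (4 * max 1 (2 ^ (q - 2))) * (lam ^ 2 * rhoShift κ q 0 a) ≤
      rhoShiftConj κ q a (lam * ((κ + a) ^ (q - 2) * a)) := by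
  set K : ℝ := max 1 (2 ^ (q - 2))
  have hK : 1 ≤ K := le_max_left _ _
  have hla : 0 ≤ lam * a := mul_nonneg hl0 ha
  have hlab : lam * a ≤ κ + a := by nlinarith
  have hu := rpow_mul_le_rhoShiftDeriv hq hb hla hlab
  rw [mul_left_comm] at hu
  set s := lam * a / (2 * K) with hs_def
  have hs : 0 ≤ s := by positivity
  have hsb : s ≤ 1 * (κ + a) := by
    rw [one_mul, div_le_iff₀ (by positivity)]
    nlinarith
  have hgs : rhoShiftDeriv κ q a s ≤ K * (κ + a) ^ (q - 2) * s := mul_le_mul_of_nonneg_right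
    (by simpa only [one_add_one_eq_two] using rpow_add_le_max_one_mul_rpow hb hs hsb) hs
  calc min 2 q / (4 * K) * (lam ^ 2 * rhoShift κ q 0 a)
      = lam ^ 2 / (4 * K) * (min 2 q * rhoShift κ q 0 a) := by ring
    _ ≤ lam ^ 2 / (4 * K) * ((κ + a) ^ (q - 2) * a ^ 2) :=
      mul_le_mul_of_nonneg_left (rhoShift_zero_bounds hq hκ ha).1 (by positivity)
    _ = s * (lam * ((κ + a) ^ (q - 2) * a)) - s * (K * (κ + a) ^ (q - 2) * s) := by
      rw [hs_def]
      field_simp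
      ring
    _ ≤ s * (lam * ((κ + a) ^ (q - 2) * a)) - s * rhoShiftDeriv κ q a s := by gcongr
    _ ≤ s * (lam * ((κ + a) ^ (q - 2) * a)) - rhoShift κ q a s := by
      gcongr
      exact rhoShift_le_mul_rhoShiftDeriv hq hb.le hs
    _ ≤ rhoShiftConj κ q a (lam * ((κ + a) ^ (q - 2) * a)) :=
      le_rhoShiftConj hq hb.le (by positivity) hu hs

lemma rhoShiftConj_mul_le (hq : 1 < q) (hκ : 0 ≤ κ) (ha : 0 ≤ a) (hb : 0 < κ + a)
    (hl0 : 0 ≤ lam) (hl1 : lam ≤ 1) :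
    rhoShiftConj κ q a (lam * ((κ + a) ^ (q - 2) * a)) ≤
      max 1 ((1 + 2 ^ (1 / (q - 1))) ^ (q - 2)) * (2 ^ (1 / (q - 1))) ^ 2 * max 2 q *
        (lam ^ 2 * rhoShift κ q 0 a) := by
  set N : ℝ := 2 ^ (1 / (q - 1))
  have hN : 0 ≤ N := rpow_nonneg zero_le_two _
  have hla : 0 ≤ lam * a := mul_nonneg hl0 ha
  have hlab : lam * a ≤ κ + a := by nlinarith
  have hNla : 0 ≤ N * (lam * a) := mul_nonneg hN hla
  have hu := rpow_mul_le_rhoShiftDeriv hq hb hla hlab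
  rw [mul_left_comm] at hu
  have hP := rpow_add_le_max_one_mul_rpow (p := q - 2) hb hNla
    (mul_le_mul_of_nonneg_left hlab hN)
  calc rhoShiftConj κ q a (lam * ((κ + a) ^ (q - 2) * a))
      ≤ N * (lam * a) * rhoShiftDeriv κ q a (N * (lam * a)) - rhoShift κ q a (N * (lam * a)) :=
        rhoShiftConj_le hq hb.le hNla hu
    _ ≤ (κ + a + N * (lam * a)) ^ (q - 2) * (N * (lam * a)) ^ 2 := by
      rw [rhoShiftDeriv]
      nlinarith [rhoShift_nonneg (q := q) hb.le hNla]
    _ ≤ max 1 ((1 + N) ^ (q - 2)) * (κ + a) ^ (q - 2) * (N * (lam * a)) ^ 2 := by gcongr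
    _ = max 1 ((1 + N) ^ (q - 2)) * N ^ 2 * lam ^ 2 * ((κ + a) ^ (q - 2) * a ^ 2) := by ring
    _ ≤ max 1 ((1 + N) ^ (q - 2)) * N ^ 2 * lam ^ 2 * (max 2 q * rhoShift κ q 0 a) :=
      mul_le_mul_of_nonneg_left (rhoShift_zero_bounds hq hκ ha).2 (by positivity)
    _ = max 1 ((1 + N) ^ (q - 2)) * N ^ 2 * max 2 q * (lam ^ 2 * rhoShift κ q 0 a) := by ring

theorem exists_rhoShiftConj_mul_bounds (hq : 1 < q) :
    ∃ c C : ℝ, 0 < c ∧ ∀ κ a lam : ℝ, 0 ≤ κ → 0 ≤ a → 0 < κ + a → lam ∈ Icc (0 : ℝ) 1 →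
      c * (lam ^ 2 * rhoShift κ q 0 a) ≤ rhoShiftConj κ q a (lam * ((κ + a) ^ (q - 2) * a)) ∧
        rhoShiftConj κ q a (lam * ((κ + a) ^ (q - 2) * a)) ≤
          C * (lam ^ 2 * rhoShift κ q 0 a) :=
  ⟨_, _, div_pos (lt_min two_pos (by linarith)) (by positivity),
    fun _ _ _ hκ ha hb hlam => ⟨le_rhoShiftConj_mul hq hκ ha hb hlam.1 hlam.2,
      rhoShiftConj_mul_le hq hκ ha hb hlam.1 hlam.2⟩⟩

end

lemma bounds_mono {c c' C C' X Y : ℝ} (hX : 0 ≤ X) (hc : c' ≤ c) (hC : C ≤ C')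
    (h : c * X ≤ Y ∧ Y ≤ C * X) : c' * X ≤ Y ∧ Y ≤ C' * X :=
  ⟨(mul_le_mul_of_nonneg_right hc hX).trans h.1, h.2.trans (mul_le_mul_of_nonneg_right hC hX)⟩

/-- (Lemma `lem:shifted2` for constant exponent `q`.)
Let `q ∈ (1,∞)` and `κ ≥ 0`. There are `0 < c ≤ C < ∞` depending only on `q` such that:
(i) for all `a ≥ 0` with `κ + a > 0` and all `λ ∈ [0,1]`,
`ρ_a(λ a) ∼ λ² ρ(a) ∼ (ρ_a)*(λ ρ'(a))` where `ρ'(a) = (κ+a)^{q−2} a`; and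
(ii) for all `a, t ≥ 0` with `κ + a + t > 0`, `(ρ_a)*(ρ'_a(t)) ∼ ρ_a(t)` where
`ρ'_a(t) = (κ+a+t)^{q−2} t`. -/
theorem stmt16 (q : ℝ) (hq : 1 < q) :
    ∃ c C : ℝ, 0 < c ∧ c ≤ C ∧ ∀ κ : ℝ, 0 ≤ κ →
      ((∀ a : ℝ, 0 ≤ a → 0 < κ + a → ∀ lam : ℝ, lam ∈ Set.Icc (0:ℝ) 1 →
        (c * lam ^ 2 * rhoShift κ q 0 a ≤ rhoShift κ q a (lam * a) ∧
          rhoShift κ q a (lam * a) ≤ C * lam ^ 2 * rhoShift κ q 0 a) ∧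
        (c * lam ^ 2 * rhoShift κ q 0 a ≤
            rhoShiftConj κ q a (lam * ((κ + a) ^ (q - 2) * a)) ∧
          rhoShiftConj κ q a (lam * ((κ + a) ^ (q - 2) * a)) ≤
            C * lam ^ 2 * rhoShift κ q 0 a)) ∧
      (∀ a t : ℝ, 0 ≤ a → 0 ≤ t → 0 < κ + a + t →
        c * rhoShift κ q a t ≤ rhoShiftConj κ q a ((κ + a + t) ^ (q - 2) * t) ∧
        rhoShiftConj κ q a ((κ + a + t) ^ (q - 2) * t) ≤ C * rhoShift κ q a t)) := by
  obtain ⟨c₁, C₁, hc₁, hshift⟩ := exists_rhoShift_mul_bounds hq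
  obtain ⟨c₂, C₂, hc₂, hconj⟩ := exists_rhoShiftConj_mul_bounds hq
  have hc₃ : 0 < min 2 q - 1 := sub_pos.2 (lt_min one_lt_two hq)
  refine ⟨min (min c₁ c₂) (min 2 q - 1), max (max C₁ C₂) (max 2 q - 1),
    lt_min (lt_min hc₁ hc₂) hc₃,
    (min_le_right _ _).trans ((sub_le_sub_right min_le_max 1).trans (le_max_right _ _)),
    fun κ hκ => ⟨fun a ha hb lam hlam => ?_, fun a t ha ht _ => ?_⟩⟩
  · have hX : 0 ≤ lam ^ 2 * rhoShift κ q 0 a :=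
      mul_nonneg (sq_nonneg lam) (rhoShift_nonneg (by simpa using hκ) ha)
    simp only [mul_assoc]
    exact ⟨bounds_mono hX ((min_le_left _ _).trans (min_le_left _ _))
        ((le_max_left _ _).trans (le_max_left _ _)) (hshift κ a lam hκ ha hb hlam),
      bounds_mono hX ((min_le_left _ _).trans (min_le_right _ _))
        ((le_max_right _ _).trans (le_max_left _ _)) (hconj κ a lam hκ ha hb hlam)⟩
  · exact bounds_mono (rhoShift_nonneg (add_nonneg hκ ha) ht) (min_le_right _ _)
      (le_max_right _ _) (rhoShiftConj_rhoShiftDeriv_bounds hq (add_nonneg hκ ha) ht)
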